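/- arXiv:2305.15501 — 9 statements merged into one kernel-verified Lean document; each statement's English description precedes it below -/
import Mathlib

section
/- There exists a joint probability distribution p on a finite product V × V with full support such that the MRF distribution q(w1,w2) ∝ p_{1|2}(w1|w2)·p_{2|1}(w2|w1) has a conditional q_{1|2}(·|w2) that differs from p_{1|2}(·|w2) for some w2 ∈ V; i.e., the MRF construction is not faithful to compatible conditionals in general. -/
/-!
The conditional of the MRF distribution is `q_{1|2}(w1|w2) ∝ p_{1|2}(w1|w2) · p_{2|1}(w2|w1)`
(the normalizer `Z` cancels). If it agrees with `p_{1|2}(·|w2)`, then `p_{2|1}(w2|·)` must be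
constant, equal to the normalizing sum. So any `p` whose second coordinate depends on the first
is a counterexample, e.g. the joint `[[0.4, 0.1], [0.2, 0.3]]` on `Fin 2 × Fin 2`, where
`p_{2|1}(0|0) = 0.8 ≠ 0.4 = p_{2|1}(0|1)`.
-/

/-- The MRF construction from a strictly positive joint `p` on `V × V` has, for
some `w2`, a conditional `q_{1|2}(·|w2)` that differs from `p_{1|2}(·|w2)`. -/
def MRFUnfaithfulAt (V : Type) [Fintype V] (p : V → V → ℝ) : Prop :=
  (∀ w1 w2, 0 < p w1 w2) ∧ (∑ w1 : V, ∑ w2 : V, p w1 w2) = 1 ∧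
  let p12 : V → V → ℝ := fun w1 w2 => p w1 w2 / ∑ w' : V, p w' w2
  let p21 : V → V → ℝ := fun w2 w1 => p w1 w2 / ∑ w' : V, p w1 w'
  let Z : ℝ := ∑ w1 : V, ∑ w2 : V, p12 w1 w2 * p21 w2 w1
  let q : V → V → ℝ := fun w1 w2 => p12 w1 w2 * p21 w2 w1 / Z
  let q12 : V → V → ℝ := fun w1 w2 => q w1 w2 / ∑ w' : V, q w' w2
  ∃ w2 w1, q12 w1 w2 ≠ p12 w1 w2

theorem mrfUnfaithfulAt_of_cond_ne {V : Type} [Fintype V] {p : V → V → ℝ}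
    (hpos : ∀ w1 w2, 0 < p w1 w2) (hsum : ∑ w1, ∑ w2, p w1 w2 = 1) {w1 w1' w2 : V}
    (hne : p w1 w2 / ∑ w, p w1 w ≠ p w1' w2 / ∑ w, p w1' w) :
    MRFUnfaithfulAt V p := by
  refine ⟨hpos, hsum, ?_⟩
  have : Nonempty V := ⟨w2⟩
  intro p12 p21 Z q q12
  have hp12 : ∀ w w', 0 < p12 w w' := fun w w' =>
    div_pos (hpos w w') (Finset.sum_pos (fun _ _ => hpos _ _) Finset.univ_nonempty)
  have hp21 : ∀ w w', 0 < p21 w' w := fun w w' =>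
    div_pos (hpos w w') (Finset.sum_pos (fun _ _ => hpos _ _) Finset.univ_nonempty)
  have hZ : 0 < Z := Finset.sum_pos (fun w _ => Finset.sum_pos
    (fun w' _ => mul_pos (hp12 w w') (hp21 w w')) Finset.univ_nonempty) Finset.univ_nonempty
  have hq12 : ∀ w, q12 w w2 = p12 w w2 * p21 w2 w / ∑ v, p12 v w2 * p21 w2 v := by
    intro w
    simp only [q12, q, ← Finset.sum_div]
    exact div_div_div_cancel_right₀ hZ.ne' _ _
  by_contra! hfaith
  have hS : 0 < ∑ v, p12 v w2 * p21 w2 v :=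
    Finset.sum_pos (fun v _ => mul_pos (hp12 v w2) (hp21 v w2)) Finset.univ_nonempty
  have hconst : ∀ w, p21 w2 w = ∑ v, p12 v w2 * p21 w2 v := by
    intro w
    have h := (hq12 w).symm.trans (hfaith w2 w)
    rwa [mul_div_assoc, mul_eq_left₀ (hp12 w w2).ne', div_eq_one_iff_eq hS.ne'] at h
  exact hne ((hconst w1).trans (hconst w1').symm)

/-- There exists a strictly positive joint distribution on a finite
product `V × V` such that the MRF construction `q(w1,w2) ∝ p_{1|2}(w1|w2)·p_{2|1}(w2|w1)`
is not faithful to the (compatible) conditionals of `p`. -/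
theorem mrf_not_faithful_in_general :
    ∃ (V : Type) (inst : Fintype V) (_ : Nonempty V) (p : V → V → ℝ),
      @MRFUnfaithfulAt V inst p := by
  refine ⟨Fin 2, inferInstance, ⟨0⟩, fun i j => ![![(0.4:ℝ), 0.1], ![0.2, 0.3]] i j,
    mrfUnfaithfulAt_of_cond_ne (w1 := 0) (w1' := 1) (w2 := 0) ?_ ?_ ?_⟩
  · intro w1 w2; fin_cases w1 <;> fin_cases w2 <;> norm_num
  · simp only [Fin.sum_univ_two]; norm_num
  · simp only [Fin.sum_univ_two]; norm_num
end

section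
/- For any strictly positive joint distribution p on V × V, the KL divergence KL(p_{1|2}(·|w2) ‖ q_{1|2}(·|w2)) equals the Jensen gap log E_{w∼p_{1|2}(·|w2)}[p_{2|1}(w2|w)] − E_{w∼p_{1|2}(·|w2)}[log p_{2|1}(w2|w)], where q is the MRF construction q(w1,w2) ∝ p_{1|2}(w1|w2)·p_{2|1}(w2|w1). -/
/-!
Conditioning `q ∝ p_{1|2} · p_{2|1}` on `w2` forgets the normaliser, so `q_{1|2}(·|w2)` is
`p_{1|2}(·|w2)` reweighted by `w ↦ p_{2|1}(w2|w)` and renormalised. For any reweighting `μ g / E_μ g`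
of a probability vector `μ`, the log-ratio `log (μ / (μ g / E_μ g)) = log E_μ g - log g`, and
averaging it against `μ` gives the Jensen gap.
-/

open Finset Real

theorem div_const_div_sum_div_const {ι K : Type*} [Field K] (s : Finset ι) (f : ι → K) {c : K}
    (hc : c ≠ 0) (i : ι) : f i / c / ∑ j ∈ s, f j / c = f i / ∑ j ∈ s, f j := by
  rw [← Finset.sum_div, div_div_div_cancel_right₀ hc]

theorem sum_div_sum_self_eq_one {ι K : Type*} [Field K] (s : Finset ι) (f : ι → K)
    (hf : ∑ j ∈ s, f j ≠ 0) : ∑ i ∈ s, f i / ∑ j ∈ s, f j = 1 := by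
  rw [← Finset.sum_div, div_self hf]

theorem sum_mul_log_div_reweight {ι : Type*} [Fintype ι] (μ g : ι → ℝ)
    (hμ : ∀ i, 0 < μ i) (hμ1 : ∑ i, μ i = 1) (hg : ∀ i, 0 < g i) :
    ∑ i, μ i * log (μ i / (μ i * g i / ∑ j, μ j * g j))
      = log (∑ j, μ j * g j) - ∑ i, μ i * log (g i) := by
  have hne : Nonempty ι := by
    by_contra h
    simp [not_nonempty_iff.mp h] at hμ1
  have hS : 0 < ∑ j, μ j * g j :=
    Finset.sum_pos (fun j _ => mul_pos (hμ j) (hg j)) Finset.univ_nonempty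
  have hlog : ∀ i, log (μ i / (μ i * g i / ∑ j, μ j * g j))
      = log (∑ j, μ j * g j) - log (g i) := fun i => by
    rw [div_div_eq_mul_div, mul_comm (μ i) (g i), mul_comm (μ i), mul_div_mul_right _ _ (hμ i).ne',
      log_div hS.ne' (hg i).ne']
  simp only [hlog, mul_sub, Finset.sum_sub_distrib, ← Finset.sum_mul, hμ1, one_mul]

theorem kl_to_mrf_conditional_eq_jensen_gap_general
    {V : Type*} [Fintype V] (p : V → V → ℝ)
    (hpos : ∀ w1 w2, 0 < p w1 w2) (w2 : V) :
    let p1 : V → ℝ := fun w1 => ∑ w' : V, p w1 w'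
    let p2 : V → ℝ := fun v => ∑ w' : V, p w' v
    let p12 : V → V → ℝ := fun a b => p a b / p2 b
    let p21 : V → V → ℝ := fun b a => p a b / p1 a
    let Z : ℝ := ∑ a : V, ∑ b : V, p12 a b * p21 b a
    let q : V → V → ℝ := fun a b => p12 a b * p21 b a / Z
    let q12 : V → V → ℝ := fun a b => q a b / ∑ w' : V, q w' b
    (∑ w : V, p12 w w2 * Real.log (p12 w w2 / q12 w w2))
      = Real.log (∑ w : V, p12 w w2 * p21 w2 w)
        - ∑ w : V, p12 w w2 * Real.log (p21 w2 w) := by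
  intro p1 p2 p12 p21 Z q q12
  have : Nonempty V := ⟨w2⟩
  have hp1 : ∀ a, 0 < p1 a := fun a => Finset.sum_pos (fun _ _ => hpos a _) Finset.univ_nonempty
  have hp2 : ∀ b, 0 < p2 b := fun b => Finset.sum_pos (fun _ _ => hpos _ b) Finset.univ_nonempty
  have hp12 : ∀ a b, 0 < p12 a b := fun a b => div_pos (hpos a b) (hp2 b)
  have hp21 : ∀ b a, 0 < p21 b a := fun b a => div_pos (hpos a b) (hp1 a)
  have hZ : 0 < Z := Finset.sum_pos (fun a _ => Finset.sum_pos
    (fun b _ => mul_pos (hp12 a b) (hp21 b a)) Finset.univ_nonempty) Finset.univ_nonempty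
  have hq12 : ∀ w, q12 w w2 = p12 w w2 * p21 w2 w / ∑ w', p12 w' w2 * p21 w2 w' := fun w =>
    div_const_div_sum_div_const _ (fun a => p12 a w2 * p21 w2 a) hZ.ne' w
  have hp12_sum : ∑ w, p12 w w2 = 1 := sum_div_sum_self_eq_one _ (fun a => p a w2) (hp2 w2).ne'
  simp only [hq12]
  exact sum_mul_log_div_reweight (p12 · w2) (p21 w2) (hp12 · w2) hp12_sum (hp21 w2)

/-- For a strictly positive joint `p` on `V × V`, the KL divergence
from `p_{1|2}(·|w2)` to the MRF conditional `q_{1|2}(·|w2)` equals the Jensen gap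
`log E_{w ∼ p_{1|2}(·|w2)}[p_{2|1}(w2|w)] − E_{w ∼ p_{1|2}(·|w2)}[log p_{2|1}(w2|w)]`. -/
theorem kl_to_mrf_conditional_eq_jensen_gap
    {V : Type*} [Fintype V] [Nonempty V] (p : V → V → ℝ)
    (hpos : ∀ w1 w2, 0 < p w1 w2)
    (hsum : (∑ w1 : V, ∑ w2 : V, p w1 w2) = 1) (w2 : V) :
    let p1 : V → ℝ := fun w1 => ∑ w' : V, p w1 w'
    let p2 : V → ℝ := fun v => ∑ w' : V, p w' v
    let p12 : V → V → ℝ := fun a b => p a b / p2 b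
    let p21 : V → V → ℝ := fun b a => p a b / p1 a
    let Z : ℝ := ∑ a : V, ∑ b : V, p12 a b * p21 b a
    let q : V → V → ℝ := fun a b => p12 a b * p21 b a / Z
    let q12 : V → V → ℝ := fun a b => q a b / ∑ w' : V, q w' b
    (∑ w : V, p12 w w2 * Real.log (p12 w w2 / q12 w w2))
      = Real.log (∑ w : V, p12 w w2 * p21 w2 w)
        - ∑ w : V, p12 w w2 * Real.log (p21 w2 w) :=
  kl_to_mrf_conditional_eq_jensen_gap_general p hpos w2
end

section
/- (Hammersley–Clifford–Besag for two variables) Let p be a strictly positive joint distribution on V1 × V2 with conditionals p_{1|2} and p_{2|1}. Fix any pivot (w1', w2') ∈ V1 × V2. Then the distribution defined by q(w1, w2) ∝ [p_{1|2}(w1|w2)/p_{1|2}(w1'|w2)] · [p_{2|1}(w2|w1')/p_{2|1}(w2'|w1')] equals p exactly. -/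
/-!
Dividing a conditional of `p` by the same conditional at the pivot cancels its normalizing
marginal, so each factor of `r` is a ratio of joint probabilities, and the product telescopes
(Brook's lemma): `r a b = p a b / p w1' w2'`. Thus `r` is a constant multiple of `p`, and
normalizing it recovers `p` because `p` already sums to `1`.
-/

open Finset

theorem brook_ratio_eq {V1 V2 : Type*} [Fintype V1] [Fintype V2] (p : V1 → V2 → ℝ)
    (hpos : ∀ w1 w2, 0 < p w1 w2) (w1' : V1) (w2' : V2) (a : V1) (b : V2) :
    (p a b / ∑ w, p w b) / (p w1' b / ∑ w, p w b) *
        ((p w1' b / ∑ w, p w1' w) / (p w1' w2' / ∑ w, p w1' w)) =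
      p a b / p w1' w2' := by
  have hcol : ∑ w, p w b ≠ 0 :=
    (sum_pos (fun w _ => hpos w b) ⟨w1', mem_univ _⟩).ne'
  have hrow : ∑ w, p w1' w ≠ 0 :=
    (sum_pos (fun w _ => hpos w1' w) ⟨w2', mem_univ _⟩).ne'
  rw [div_div_div_cancel_right₀ hcol, div_div_div_cancel_right₀ hrow,
    div_mul_div_cancel₀ (hpos w1' b).ne']

theorem div_const_div_sum_sum_div_const {V1 V2 : Type*} [Fintype V1] [Fintype V2]
    (p : V1 → V2 → ℝ) (hsum : ∑ x, ∑ y, p x y = 1) {c : ℝ} (hc : c ≠ 0) (a : V1) (b : V2) :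
    p a b / c / ∑ x, ∑ y, p x y / c = p a b := by
  simp only [← sum_div, hsum]
  field_simp

theorem hcb_two_variable_recovery_general
    {V1 V2 : Type*} [Fintype V1] [Fintype V2]
    (p : V1 → V2 → ℝ) (hpos : ∀ w1 w2, 0 < p w1 w2)
    (hsum : (∑ w1 : V1, ∑ w2 : V2, p w1 w2) = 1) (w1' : V1) (w2' : V2) :
    let p12 : V1 → V2 → ℝ := fun a b => p a b / ∑ w : V1, p w b
    let p21 : V2 → V1 → ℝ := fun b a => p a b / ∑ w : V2, p a w
    let r : V1 → V2 → ℝ :=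
      fun a b => (p12 a b / p12 w1' b) * (p21 b w1' / p21 w2' w1')
    let q : V1 → V2 → ℝ := fun a b => r a b / ∑ x : V1, ∑ y : V2, r x y
    ∀ w1 w2, q w1 w2 = p w1 w2 := by
  intro p12 p21 r q w1 w2
  have hr : ∀ a b, r a b = p a b / p w1' w2' := brook_ratio_eq p hpos w1' w2'
  show r w1 w2 / ∑ x, ∑ y, r x y = p w1 w2
  simp only [hr]
  exact div_const_div_sum_sum_div_const p hsum (hpos w1' w2').ne' w1 w2

/-- Hammersley–Clifford–Besag for two variables: for a strictly
positive joint `p` on `V1 × V2` and any pivot `(w1', w2')`, the normalization of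
`(w1,w2) ↦ [p_{1|2}(w1|w2)/p_{1|2}(w1'|w2)] · [p_{2|1}(w2|w1')/p_{2|1}(w2'|w1')]`
recovers `p` exactly. -/
theorem hcb_two_variable_recovery
    {V1 V2 : Type*} [Fintype V1] [Fintype V2] [Nonempty V1] [Nonempty V2]
    (p : V1 → V2 → ℝ) (hpos : ∀ w1 w2, 0 < p w1 w2)
    (hsum : (∑ w1 : V1, ∑ w2 : V2, p w1 w2) = 1) (w1' : V1) (w2' : V2) :
    let p12 : V1 → V2 → ℝ := fun a b => p a b / ∑ w : V1, p w b
    let p21 : V2 → V1 → ℝ := fun b a => p a b / ∑ w : V2, p a w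
    let r : V1 → V2 → ℝ :=
      fun a b => (p12 a b / p12 w1' b) * (p21 b w1' / p21 w2' w1')
    let q : V1 → V2 → ℝ := fun a b => r a b / ∑ x : V1, ∑ y : V2, r x y
    ∀ w1 w2, q w1 w2 = p w1 w2 :=
  hcb_two_variable_recovery_general p hpos hsum w1' w2'
end

section
/- Two strictly positive conditional families p_{1|2}: V2 → Δ(V1) and p_{2|1}: V1 → Δ(V2) are compatible (i.e., arise as the conditionals of some joint distribution on V1 × V2) if and only if there exist functions f: V1 → ℝ_{>0} and g: V2 → ℝ_{>0} such that p_{1|2}(w1|w2)/p_{2|1}(w2|w1) = f(w1)·g(w2) for all w1 ∈ V1, w2 ∈ V2. -/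
/-- Arnold–Press factorization criterion: strictly positive
conditional families `q12 : V2 → Δ(V1)` and `q21 : V1 → Δ(V2)` are compatible
(arise as the conditionals of some strictly positive joint on `V1 × V2`) iff
there are strictly positive `f : V1 → ℝ` and `g : V2 → ℝ` with
`q12 w1 w2 / q21 w2 w1 = f w1 * g w2` for all `w1, w2`. -/
theorem conditionals_compatible_iff_ratio_factorizes
    {V1 V2 : Type*} [Fintype V1] [Fintype V2] [Nonempty V1] [Nonempty V2]
    (q12 : V1 → V2 → ℝ) (q21 : V2 → V1 → ℝ)
    (h12pos : ∀ w1 w2, 0 < q12 w1 w2) (h12sum : ∀ w2, (∑ w1 : V1, q12 w1 w2) = 1)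
    (h21pos : ∀ w2 w1, 0 < q21 w2 w1) (h21sum : ∀ w1, (∑ w2 : V2, q21 w2 w1) = 1) :
    (∃ p : V1 → V2 → ℝ, (∀ w1 w2, 0 < p w1 w2) ∧
        (∑ w1 : V1, ∑ w2 : V2, p w1 w2) = 1 ∧
        (∀ w1 w2, p w1 w2 / (∑ w : V1, p w w2) = q12 w1 w2) ∧
        (∀ w1 w2, p w1 w2 / (∑ w : V2, p w1 w) = q21 w2 w1)) ↔
      (∃ (f : V1 → ℝ) (g : V2 → ℝ), (∀ w1, 0 < f w1) ∧ (∀ w2, 0 < g w2) ∧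
        ∀ w1 w2, q12 w1 w2 / q21 w2 w1 = f w1 * g w2) := by
  constructor
  · rintro ⟨p, hpos, -, h12, h21⟩
    refine ⟨fun w1 => ∑ w : V2, p w1 w, fun w2 => (∑ w : V1, p w w2)⁻¹,
      fun w1 => Finset.sum_pos (fun w _ => hpos w1 w) Finset.univ_nonempty,
      fun w2 => inv_pos.mpr (Finset.sum_pos (fun w _ => hpos w w2) Finset.univ_nonempty),
      fun w1 w2 => ?_⟩
    have hr : (0:ℝ) < ∑ w : V2, p w1 w :=
      Finset.sum_pos (fun w _ => hpos w1 w) Finset.univ_nonempty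
    have hc : (0:ℝ) < ∑ w : V1, p w w2 :=
      Finset.sum_pos (fun w _ => hpos w w2) Finset.univ_nonempty
    have hp := (hpos w1 w2).ne'
    rw [← h12 w1 w2, ← h21 w1 w2]
    field_simp
  · rintro ⟨f, g, hf, hg, hfg⟩
    set Z : ℝ := ∑ w1 : V1, f w1 with hZ
    have hZpos : 0 < Z := Finset.sum_pos (fun w _ => hf w) Finset.univ_nonempty
    have hq : ∀ w1 w2, q12 w1 w2 = f w1 * g w2 * q21 w2 w1 := fun w1 w2 =>
      (div_eq_iff (h21pos w2 w1).ne').mp (hfg w1 w2)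
    have key : ∀ (w2 : V2) (w : V1), q21 w2 w * f w = q12 w w2 / g w2 := by
      intro w2 w
      rw [eq_div_iff (hg w2).ne', hq w w2]; ring
    have hrow : ∀ w1 : V1, (∑ w2 : V2, q21 w2 w1 * f w1 / Z) = f w1 / Z := by
      intro w1
      rw [← Finset.sum_div, ← Finset.sum_mul, h21sum w1, one_mul]
    have hcol : ∀ w2 : V2, (∑ w : V1, q21 w2 w * f w / Z) = 1 / (g w2 * Z) := by
      intro w2
      simp only [key w2]
      rw [← Finset.sum_div, ← Finset.sum_div, h12sum w2, div_div]
    refine ⟨fun w1 w2 => q21 w2 w1 * f w1 / Z,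
      fun w1 w2 => div_pos (mul_pos (h21pos w2 w1) (hf w1)) hZpos, ?_, ?_, ?_⟩
    · simp only [hrow]
      rw [← Finset.sum_div]
      exact div_self hZpos.ne'
    · intro w1 w2
      simp only [hcol w2]
      rw [key w2 w1]
      field_simp
      rw [mul_div_assoc, div_self (hg w2).ne', mul_one]
    · intro w1 w2
      simp only [hrow w1]
      rw [div_div_div_eq, mul_comm Z (f w1), mul_assoc, mul_div_assoc,
        div_self (mul_pos (hf w1) hZpos).ne', mul_one]
end

section
/- If p_{1|2}(w1|w2)/p_{2|1}(w2|w1) = f(w1)·g(w2) for strictly positive functions f, g on finite sets V1, V2, then the joint distribution defined by p(w1,w2) ∝ f(w1)·p_{2|1}(w2|w1) has conditionals exactly equal to p_{1|2} and p_{2|1}. -/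
/-!
Clearing the denominator in the hypothesis gives `q12 w1 w2 = f w1 * g w2 * q21 w2 w1`.
Summing this over `w1` shows that the column sums of `f w1 * q21 w2 w1` are `(g w2)⁻¹`, while
its row sums are `f w1` because `q21 (· | w1)` is a distribution. Normalizing by `Z` does not
change ratios, so the conditionals of `p` are `f w1 * q21 w2 w1 * g w2 = q12 w1 w2` and
`f w1 * q21 w2 w1 / f w1 = q21 w2 w1`.
-/

open Finset

section Conditionals

variable {α β K : Type*} [Field K]

theorem div_sum_div_const (s : Finset α) (a : K) (b : α → K) {Z : K} (hZ : Z ≠ 0) :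
    a / Z / ∑ i ∈ s, b i / Z = a / ∑ i ∈ s, b i := by
  rw [← sum_div, div_div_div_cancel_right₀ hZ]

theorem sum_mul_eq_of_sum_eq_one [Fintype β] (f : α → K) (q : β → α → K)
    (hq : ∀ a, ∑ b, q b a = 1) (a : α) : ∑ b, f a * q b a = f a := by
  rw [← mul_sum, hq, mul_one]

theorem sum_mul_eq_inv_of_eq_mul_mul [Fintype α] (q12 : α → β → K) (q21 : β → α → K)
    (f : α → K) (g : β → K) (b : β)
    (hsum : ∑ a, q12 a b = 1) (hq : ∀ a, q12 a b = f a * g b * q21 b a) :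
    ∑ a, f a * q21 b a = (g b)⁻¹ := by
  refine eq_inv_of_mul_eq_one_right ?_
  rw [mul_sum, ← hsum]
  exact sum_congr rfl fun a _ => by rw [hq]; ring

end Conditionals

theorem factorized_ratio_gives_compatible_joint_general
    {V1 V2 : Type*} [Fintype V1] [Fintype V2]
    (q12 : V1 → V2 → ℝ) (q21 : V2 → V1 → ℝ)
    (h12sum : ∀ w2, (∑ w1 : V1, q12 w1 w2) = 1)
    (h21pos : ∀ w2 w1, 0 < q21 w2 w1) (h21sum : ∀ w1, (∑ w2 : V2, q21 w2 w1) = 1)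
    (f : V1 → ℝ) (g : V2 → ℝ) (hf : ∀ w1, 0 < f w1)
    (hfactor : ∀ w1 w2, q12 w1 w2 / q21 w2 w1 = f w1 * g w2) :
    let Z : ℝ := ∑ x : V1, ∑ y : V2, f x * q21 y x
    let p : V1 → V2 → ℝ := fun w1 w2 => f w1 * q21 w2 w1 / Z
    (∀ w1 w2, p w1 w2 / (∑ w : V1, p w w2) = q12 w1 w2) ∧
    (∀ w1 w2, p w1 w2 / (∑ w : V2, p w1 w) = q21 w2 w1) := by
  intro Z p
  have hq12 (w1 w2) : q12 w1 w2 = f w1 * g w2 * q21 w2 w1 :=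
    (div_eq_iff (h21pos w2 w1).ne').1 (hfactor w1 w2)
  have hrow := sum_mul_eq_of_sum_eq_one f q21 h21sum
  have hZ (w1 : V1) : Z ≠ 0 := by
    have : 0 < ∑ x, f x := sum_pos (fun x _ => hf x) ⟨w1, mem_univ w1⟩
    simpa only [Z, hrow] using this.ne'
  refine ⟨fun w1 w2 => ?_, fun w1 w2 => ?_⟩
  · rw [div_sum_div_const _ _ _ (hZ w1),
      sum_mul_eq_inv_of_eq_mul_mul q12 q21 f g w2 (h12sum w2) (hq12 · w2), div_inv_eq_mul, hq12]
    ring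
  · rw [div_sum_div_const _ _ _ (hZ w1), hrow, mul_div_cancel_left₀ _ (hf w1).ne']

/-- If `q12(w1|w2)/q21(w2|w1) = f(w1)·g(w2)` for strictly positive
`f, g`, then the joint `p(w1,w2) ∝ f(w1)·q21(w2|w1)` has conditionals exactly
`q12` and `q21`. -/
theorem factorized_ratio_gives_compatible_joint
    {V1 V2 : Type*} [Fintype V1] [Fintype V2] [Nonempty V1] [Nonempty V2]
    (q12 : V1 → V2 → ℝ) (q21 : V2 → V1 → ℝ)
    (h12pos : ∀ w1 w2, 0 < q12 w1 w2) (h12sum : ∀ w2, (∑ w1 : V1, q12 w1 w2) = 1)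
    (h21pos : ∀ w2 w1, 0 < q21 w2 w1) (h21sum : ∀ w1, (∑ w2 : V2, q21 w2 w1) = 1)
    (f : V1 → ℝ) (g : V2 → ℝ) (hf : ∀ w1, 0 < f w1) (hg : ∀ w2, 0 < g w2)
    (hfactor : ∀ w1 w2, q12 w1 w2 / q21 w2 w1 = f w1 * g w2) :
    let Z : ℝ := ∑ x : V1, ∑ y : V2, f x * q21 y x
    let p : V1 → V2 → ℝ := fun w1 w2 => f w1 * q21 w2 w1 / Z
    (∀ w1 w2, p w1 w2 / (∑ w : V1, p w w2) = q12 w1 w2) ∧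
    (∀ w1 w2, p w1 w2 / (∑ w : V2, p w1 w) = q21 w2 w1) :=
  factorized_ratio_gives_compatible_joint_general q12 q21 h12sum h21pos h21sum f g hf hfactor
end

section
/- Let q_{1|2} and q_{2|1} be strictly positive conditional families on finite sets V1, V2. If they are compatible with a strictly positive joint p, then p is the unique minimizer (value zero) of the objective J(μ) = Σ_{w2} KL(q_{1|2}(·|w2) ‖ μ_{1|2}(·|w2)) + Σ_{w1} KL(q_{2|1}(·|w1) ‖ μ_{2|1}(·|w1)) over strictly positive joint distributions μ on V1 × V2. -/
/-!
Gibbs' inequality makes each KL term nonnegative, vanishing exactly when the conditional of `μ`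
agrees with the given one, and the given conditionals are those of `p`. So `J μ = 0` forces `μ`
to share both conditionals with `p`. Then the ratio `μ w1 w2 / p w1 w2` depends only on `w2`
(equal conditionals given `w2`) and only on `w1` (equal conditionals given `w1`), hence is a
constant, which equals `1` because `μ` and `p` have the same total mass.
-/

open Real InformationTheory

noncomputable def discreteKL {ι : Type*} [Fintype ι] (q m : ι → ℝ) : ℝ :=
  ∑ i, q i * log (q i / m i)

section discreteKL

variable {ι : Type*} [Fintype ι] {q m : ι → ℝ}

theorem discreteKL_self (q : ι → ℝ) : discreteKL q q = 0 := by
  simp [discreteKL]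

theorem discreteKL_eq_sum_mul_klFun (hm : ∀ i, 0 < m i) (hsum : ∑ i, q i = ∑ i, m i) :
    discreteKL q m = ∑ i, m i * klFun (q i / m i) := by
  have hterm : ∀ i, m i * klFun (q i / m i) = q i * log (q i / m i) + m i - q i := fun i => by
    rw [klFun_apply]
    field_simp [(hm i).ne']
  rw [Finset.sum_congr rfl fun i _ => hterm i, Finset.sum_sub_distrib, Finset.sum_add_distrib,
    hsum, add_sub_cancel_right, discreteKL]

theorem discreteKL_nonneg (hq : ∀ i, 0 ≤ q i) (hm : ∀ i, 0 < m i)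
    (hsum : ∑ i, q i = ∑ i, m i) : 0 ≤ discreteKL q m := by
  rw [discreteKL_eq_sum_mul_klFun hm hsum]
  exact Finset.sum_nonneg fun i _ =>
    mul_nonneg (hm i).le (klFun_nonneg (div_nonneg (hq i) (hm i).le))

theorem eq_of_discreteKL_eq_zero (hq : ∀ i, 0 ≤ q i) (hm : ∀ i, 0 < m i)
    (hsum : ∑ i, q i = ∑ i, m i) (h : discreteKL q m = 0) : q = m := by
  rw [discreteKL_eq_sum_mul_klFun hm hsum] at h
  have hnonneg : ∀ i ∈ Finset.univ, 0 ≤ m i * klFun (q i / m i) := fun i _ =>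
    mul_nonneg (hm i).le (klFun_nonneg (div_nonneg (hq i) (hm i).le))
  funext i
  have hi := (Finset.sum_eq_zero_iff_of_nonneg hnonneg).mp h i (Finset.mem_univ i)
  rw [mul_eq_zero, klFun_eq_zero_iff (div_nonneg (hq i) (hm i).le), div_eq_one_iff_eq (hm i).ne']
    at hi
  exact hi.resolve_left (hm i).ne'

end discreteKL

/-- `condFst μ a b = μ(a | b)`; the conditional of the second coordinate is `condFst (flip μ)`. -/
noncomputable def condFst {α β : Type*} [Fintype α] (μ : α → β → ℝ) (a : α) (b : β) : ℝ :=
  μ a b / ∑ a', μ a' b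

noncomputable def condKL {α β : Type*} [Fintype α] [Fintype β] (p μ : α → β → ℝ) : ℝ :=
  ∑ b, discreteKL (fun a => condFst p a b) (fun a => condFst μ a b)

section condFst

variable {α β : Type*} [Fintype α] {μ p : α → β → ℝ}

theorem condFst_pos [Nonempty α] (hμ : ∀ a b, 0 < μ a b) (a : α) (b : β) :
    0 < condFst μ a b :=
  div_pos (hμ a b) (Finset.sum_pos (fun a' _ => hμ a' b) Finset.univ_nonempty)

theorem sum_condFst [Nonempty α] (hμ : ∀ a b, 0 < μ a b) (b : β) :
    ∑ a, condFst μ a b = 1 := by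
  unfold condFst
  rw [← Finset.sum_div,
    div_self (Finset.sum_pos (fun a' _ => hμ a' b) Finset.univ_nonempty).ne']

theorem div_eq_div_of_condFst_eq (hμ : ∀ a b, 0 < μ a b) (hp : ∀ a b, 0 < p a b)
    (h : condFst μ = condFst p) (a a' : α) (b : β) :
    μ a b / p a b = μ a' b / p a' b := by
  have hcol : ∀ a, μ a b / p a b = (∑ a', μ a' b) / ∑ a', p a' b := fun a =>
    (div_eq_div_iff_div_eq_div' (Finset.sum_pos (fun a' _ => hμ a' b) ⟨a, Finset.mem_univ a⟩).ne'
      (hp a b).ne').mp (congrFun₂ h a b)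
  rw [hcol a, hcol a']

theorem condKL_self [Fintype β] (p : α → β → ℝ) : condKL p p = 0 := by
  simp [condKL, discreteKL_self]

variable [Nonempty α] [Fintype β]

theorem condKL_nonneg (hp : ∀ a b, 0 < p a b) (hμ : ∀ a b, 0 < μ a b) : 0 ≤ condKL p μ :=
  Finset.sum_nonneg fun b _ => discreteKL_nonneg (fun a => (condFst_pos hp a b).le)
    (fun a => condFst_pos hμ a b) ((sum_condFst hp b).trans (sum_condFst hμ b).symm)

theorem condFst_eq_of_condKL_eq_zero (hp : ∀ a b, 0 < p a b) (hμ : ∀ a b, 0 < μ a b)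
    (h : condKL p μ = 0) : condFst μ = condFst p := by
  have hsum : ∀ b, ∑ a, condFst p a b = ∑ a, condFst μ a b := fun b =>
    (sum_condFst hp b).trans (sum_condFst hμ b).symm
  have hnonneg : ∀ b ∈ Finset.univ,
      0 ≤ discreteKL (fun a => condFst p a b) (fun a => condFst μ a b) := fun b _ =>
    discreteKL_nonneg (fun a => (condFst_pos hp a b).le) (fun a => condFst_pos hμ a b) (hsum b)
  funext a b
  have hb := (Finset.sum_eq_zero_iff_of_nonneg hnonneg).mp h b (Finset.mem_univ b)
  exact (congrFun (eq_of_discreteKL_eq_zero (fun a => (condFst_pos hp a b).le)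
    (fun a => condFst_pos hμ a b) (hsum b) hb) a).symm

end condFst

theorem eq_of_condFst_eq_of_condFst_flip_eq {α β : Type*} [Fintype α] [Fintype β]
    {μ p : α → β → ℝ} (hμ : ∀ a b, 0 < μ a b) (hp : ∀ a b, 0 < p a b)
    (hmass : ∑ a, ∑ b, μ a b = ∑ a, ∑ b, p a b)
    (hfst : condFst μ = condFst p) (hsnd : condFst (flip μ) = condFst (flip p)) : μ = p := by
  funext a b
  set ρ := μ a b / p a b
  have hratio : ∀ a' b', μ a' b' = ρ * p a' b' := fun a' b' => by
    rw [← div_eq_iff (hp a' b').ne', div_eq_div_of_condFst_eq hμ hp hfst a' a b']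
    exact div_eq_div_of_condFst_eq (fun b a => hμ a b) (fun b a => hp a b) hsnd b' b a
  have hpmass : 0 < ∑ a, ∑ b, p a b :=
    Finset.sum_pos (fun a _ => Finset.sum_pos (fun b _ => hp a b) ⟨b, Finset.mem_univ b⟩)
      ⟨a, Finset.mem_univ a⟩
  have hρ : ρ = 1 := by
    simp only [hratio, ← Finset.mul_sum] at hmass
    exact (mul_eq_right₀ hpmass.ne').mp hmass
  rw [hratio, hρ, one_mul]

theorem compatible_joint_unique_minimizer_of_AG_objective_general
    {V1 V2 : Type*} [Fintype V1] [Fintype V2] [Nonempty V1] [Nonempty V2]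
    (q12 : V1 → V2 → ℝ) (q21 : V2 → V1 → ℝ)
    (p : V1 → V2 → ℝ) (hppos : ∀ w1 w2, 0 < p w1 w2)
    (hpsum : (∑ w1 : V1, ∑ w2 : V2, p w1 w2) = 1)
    (hp12 : ∀ w1 w2, p w1 w2 / (∑ w : V1, p w w2) = q12 w1 w2)
    (hp21 : ∀ w1 w2, p w1 w2 / (∑ w : V2, p w1 w) = q21 w2 w1) :
    let J : (V1 → V2 → ℝ) → ℝ := fun μ =>
      (∑ w2 : V2, ∑ w1 : V1, q12 w1 w2 *
        Real.log (q12 w1 w2 / (μ w1 w2 / (∑ w : V1, μ w w2)))) +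
      (∑ w1 : V1, ∑ w2 : V2, q21 w2 w1 *
        Real.log (q21 w2 w1 / (μ w1 w2 / (∑ w : V2, μ w1 w))))
    J p = 0 ∧
    ∀ μ : V1 → V2 → ℝ, (∀ w1 w2, 0 < μ w1 w2) →
      (∑ w1 : V1, ∑ w2 : V2, μ w1 w2) = 1 →
      0 ≤ J μ ∧ (J μ = 0 → μ = p) := by
  intro J
  obtain rfl : q12 = condFst p := funext₂ fun w1 w2 => (hp12 w1 w2).symm
  obtain rfl : q21 = condFst (flip p) := funext₂ fun w2 w1 => (hp21 w1 w2).symm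
  have hJ : ∀ μ, J μ = condKL p μ + condKL (flip p) (flip μ) := fun μ => rfl
  have hppos' : ∀ w2 w1, 0 < flip p w2 w1 := fun w2 w1 => hppos w1 w2
  refine ⟨by rw [hJ, condKL_self, condKL_self, add_zero], fun μ hμpos hμsum => ?_⟩
  have hμpos' : ∀ w2 w1, 0 < flip μ w2 w1 := fun w2 w1 => hμpos w1 w2
  have hfst := condKL_nonneg hppos hμpos
  have hsnd := condKL_nonneg hppos' hμpos'
  refine ⟨hJ μ ▸ add_nonneg hfst hsnd, fun hJ0 => ?_⟩
  rw [hJ] at hJ0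
  exact eq_of_condFst_eq_of_condFst_flip_eq hμpos hppos (hμsum.trans hpsum.symm)
    (condFst_eq_of_condKL_eq_zero hppos hμpos (by linarith))
    (condFst_eq_of_condKL_eq_zero hppos' hμpos' (by linarith))

/-- If strictly positive conditional families `q12, q21` are
compatible with a strictly positive joint `p`, then `p` is the unique minimizer
(with value zero) of
`J(μ) = Σ_{w2} KL(q12(·|w2) ‖ μ_{1|2}(·|w2)) + Σ_{w1} KL(q21(·|w1) ‖ μ_{2|1}(·|w1))`
over strictly positive joints `μ` on `V1 × V2`. -/
theorem compatible_joint_unique_minimizer_of_AG_objective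
    {V1 V2 : Type*} [Fintype V1] [Fintype V2] [Nonempty V1] [Nonempty V2]
    (q12 : V1 → V2 → ℝ) (q21 : V2 → V1 → ℝ)
    (h12pos : ∀ w1 w2, 0 < q12 w1 w2) (h21pos : ∀ w2 w1, 0 < q21 w2 w1)
    (p : V1 → V2 → ℝ) (hppos : ∀ w1 w2, 0 < p w1 w2)
    (hpsum : (∑ w1 : V1, ∑ w2 : V2, p w1 w2) = 1)
    (hp12 : ∀ w1 w2, p w1 w2 / (∑ w : V1, p w w2) = q12 w1 w2)
    (hp21 : ∀ w1 w2, p w1 w2 / (∑ w : V2, p w1 w) = q21 w2 w1) :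
    let J : (V1 → V2 → ℝ) → ℝ := fun μ =>
      (∑ w2 : V2, ∑ w1 : V1, q12 w1 w2 *
        Real.log (q12 w1 w2 / (μ w1 w2 / (∑ w : V1, μ w w2)))) +
      (∑ w1 : V1, ∑ w2 : V2, q21 w2 w1 *
        Real.log (q21 w2 w1 / (μ w1 w2 / (∑ w : V2, μ w1 w))))
    J p = 0 ∧
    ∀ μ : V1 → V2 → ℝ, (∀ w1 w2, 0 < μ w1 w2) →
      (∑ w1 : V1, ∑ w2 : V2, μ w1 w2) = 1 →
      0 ≤ J μ ∧ (J μ = 0 → μ = p) :=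
  compatible_joint_unique_minimizer_of_AG_objective_general q12 q21 p hppos hpsum hp12 hp21
end

section
/- A strictly positive joint distribution on a finite product V1 × V2 is uniquely determined by its two conditional families: if p and p' are strictly positive joints on V1 × V2 with p_{1|2} = p'_{1|2} and p_{2|1} = p'_{2|1}, then p = p'. -/
/-!
Equality of the conditionals makes `p` a column-wise rescaling of `p'` (by the ratio of the
column marginals) and also a row-wise rescaling (by the ratio of the row marginals). A matrix
that is both is a constant multiple of `p'`, and normalisation forces the constant to be `1`.
-/

open Finset

theorem eq_div_mul_of_div_eq_div {K : Type*} [Field K] {a a' s s' : K} (hs : s ≠ 0)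
    (h : a / s = a' / s') : a = s / s' * a' := by
  rw [div_eq_iff hs] at h
  rw [h]
  ring

theorem exists_const_mul_of_row_and_column_scaling {α β M : Type*} [MulZeroClass M]
    [IsRightCancelMulZero M] {p q : α → β → M} {f : β → M} {g : α → M}
    (hf : ∀ a b, p a b = f b * q a b) (hg : ∀ a b, p a b = g a * q a b) (hq : ∀ a b, q a b ≠ 0) :
    ∃ c, ∀ a b, p a b = c * q a b := by
  rcases isEmpty_or_nonempty α with _ | ⟨⟨a₀⟩⟩
  · exact ⟨0, fun a => isEmptyElim a⟩
  · refine ⟨g a₀, fun a b => ?_⟩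
    have hfg : f b = g a₀ := mul_right_cancel₀ (hq a₀ b) ((hf a₀ b).symm.trans (hg a₀ b))
    rw [hf, hfg]

theorem eq_of_eq_const_mul_of_sum_eq_one {α β K : Type*} [Fintype α] [Fintype β] [Semiring K]
    {p q : α → β → K} {c : K} (h : ∀ a b, p a b = c * q a b)
    (hp : ∑ a, ∑ b, p a b = 1) (hq : ∑ a, ∑ b, q a b = 1) : p = q := by
  have hc : c = 1 := by simpa only [h, ← mul_sum, hq, mul_one] using hp
  funext a b
  rw [h, hc, one_mul]

theorem strictly_positive_joint_determined_by_conditionals_general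
    {V1 V2 : Type*} [Fintype V1] [Fintype V2]
    (p p' : V1 → V2 → ℝ)
    (hp : ∀ w1 w2, 0 < p w1 w2) (hp' : ∀ w1 w2, 0 < p' w1 w2)
    (hsum : (∑ w1 : V1, ∑ w2 : V2, p w1 w2) = 1)
    (hsum' : (∑ w1 : V1, ∑ w2 : V2, p' w1 w2) = 1)
    (h12 : ∀ w1 w2, p w1 w2 / (∑ w : V1, p w w2) = p' w1 w2 / (∑ w : V1, p' w w2))
    (h21 : ∀ w1 w2, p w1 w2 / (∑ w : V2, p w1 w) = p' w1 w2 / (∑ w : V2, p' w1 w)) :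
    p = p' := by
  have hcol : ∀ w1 w2, p w1 w2 = (∑ w, p w w2) / (∑ w, p' w w2) * p' w1 w2 := fun w1 w2 =>
    eq_div_mul_of_div_eq_div (sum_pos (fun w _ => hp w w2) ⟨w1, mem_univ _⟩).ne' (h12 w1 w2)
  have hrow : ∀ w1 w2, p w1 w2 = (∑ w, p w1 w) / (∑ w, p' w1 w) * p' w1 w2 := fun w1 w2 =>
    eq_div_mul_of_div_eq_div (sum_pos (fun w _ => hp w1 w) ⟨w2, mem_univ _⟩).ne' (h21 w1 w2)
  obtain ⟨c, hc⟩ :=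
    exists_const_mul_of_row_and_column_scaling hcol hrow fun w1 w2 => (hp' w1 w2).ne'
  exact eq_of_eq_const_mul_of_sum_eq_one hc hsum hsum'

/-- A strictly positive joint on a finite product `V1 × V2` is
uniquely determined by its two conditional families. -/
theorem strictly_positive_joint_determined_by_conditionals
    {V1 V2 : Type*} [Fintype V1] [Fintype V2] [Nonempty V1] [Nonempty V2]
    (p p' : V1 → V2 → ℝ)
    (hp : ∀ w1 w2, 0 < p w1 w2) (hp' : ∀ w1 w2, 0 < p' w1 w2)
    (hsum : (∑ w1 : V1, ∑ w2 : V2, p w1 w2) = 1)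
    (hsum' : (∑ w1 : V1, ∑ w2 : V2, p' w1 w2) = 1)
    (h12 : ∀ w1 w2, p w1 w2 / (∑ w : V1, p w w2) = p' w1 w2 / (∑ w : V1, p' w w2))
    (h21 : ∀ w1 w2, p w1 w2 / (∑ w : V2, p w1 w) = p' w1 w2 / (∑ w : V2, p' w1 w)) :
    p = p' :=
  strictly_positive_joint_determined_by_conditionals_general p p' hp hp' hsum hsum' h12 h21
end

section
/- For a strictly positive joint p on V1 × V2, the MRF construction q(w1,w2) ∝ p_{1|2}(w1|w2)·p_{2|1}(w2|w1) equals p itself if and only if p(w1,w2)·p_1(w1)·p_2(w2) is proportional to p(w1,w2)^2, i.e., iff p(w1,w2) = c·p_1(w1)·p_2(w2) for some constant c on the support — equivalently iff p is the product of its marginals (w1 and w2 are independent under p). -/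
/-!
Put `Z` for the normalizer. Since `q = p · (p / (p₁ p₂)) / Z` and `p > 0`, the equation `q = p` says
exactly that `p = Z · p₁ p₂`. Summing over `V1 × V2` and using that `p₁ ⊗ p₂` has the same total
mass `1` as `p` forces `Z = 1`. Conversely, if `p = p₁ p₂` then `p² / (p₁ p₂) = p`, so `Z = 1` and
`q = p`.
-/

open Finset

theorem eq_of_sq_div_eq_self {G₀ : Type*} [CommGroupWithZero G₀] {a b : G₀} (ha : a ≠ 0)
    (h : a ^ 2 / b = a) : a = b := by
  have hb : b ≠ 0 := by
    rintro rfl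
    exact ha (by simpa using h.symm)
  rw [div_eq_iff hb, sq] at h
  exact mul_left_cancel₀ ha h

theorem sq_div_self {G₀ : Type*} [GroupWithZero G₀] (a : G₀) : a ^ 2 / a = a := by
  rw [sq, mul_self_div_self]

theorem sum_sum_marginal_mul_marginal {α β R : Type*} [Fintype α] [Fintype β] [CommSemiring R]
    (p : α → β → R) :
    ∑ a, ∑ b, (∑ w, p a w) * (∑ w, p w b) = (∑ a, ∑ b, p a b) ^ 2 := by
  simp_rw [← mul_sum, ← sum_mul]
  rw [sum_comm (f := fun w b => p w b), sq]

theorem mrf_equals_joint_iff_independent_general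
    {V1 V2 : Type*} [Fintype V1] [Fintype V2]
    (p : V1 → V2 → ℝ) (hpos : ∀ w1 w2, 0 < p w1 w2)
    (hsum : (∑ w1 : V1, ∑ w2 : V2, p w1 w2) = 1) :
    let p1 : V1 → ℝ := fun w1 => ∑ w : V2, p w1 w
    let p2 : V2 → ℝ := fun w2 => ∑ w : V1, p w w2
    let Z : ℝ := ∑ x : V1, ∑ y : V2, p x y ^ 2 / (p1 x * p2 y)
    let q : V1 → V2 → ℝ := fun w1 w2 => p w1 w2 ^ 2 / (p1 w1 * p2 w2 * Z)
    (∀ w1 w2, q w1 w2 = p w1 w2) ↔ (∀ w1 w2, p w1 w2 = p1 w1 * p2 w2) := by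
  intro p1 p2 Z q
  have hprod_mass : ∑ a, ∑ b, p1 a * p2 b = 1 := by
    rw [sum_sum_marginal_mul_marginal, hsum, one_pow]
  constructor
  · intro hq
    have hfactor : ∀ a b, p a b = p1 a * p2 b * Z := fun a b =>
      eq_of_sq_div_eq_self (hpos a b).ne' (hq a b)
    have hZ : Z = 1 := by
      calc Z = (∑ a, ∑ b, p1 a * p2 b) * Z := by rw [hprod_mass, one_mul]
        _ = ∑ a, ∑ b, p a b := by simp_rw [sum_mul, ← hfactor]
        _ = 1 := hsum
    intro a b
    rw [hfactor, hZ, mul_one]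
  · intro hindep
    have hZ : Z = 1 := by
      calc Z = ∑ a, ∑ b, p a b := by simp_rw [Z, ← hindep, sq_div_self]
        _ = 1 := hsum
    intro a b
    change p a b ^ 2 / (p1 a * p2 b * Z) = p a b
    rw [hZ, mul_one, ← hindep, sq_div_self]

/-- For a strictly positive joint `p` on `V1 × V2`, the MRF
construction `q(w1,w2) = p(w1,w2)² / (p_1(w1)·p_2(w2)·Z)` equals `p` iff `p` is
the product of its marginals (i.e., the two coordinates are independent). -/
theorem mrf_equals_joint_iff_independent
    {V1 V2 : Type*} [Fintype V1] [Fintype V2] [Nonempty V1] [Nonempty V2]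
    (p : V1 → V2 → ℝ) (hpos : ∀ w1 w2, 0 < p w1 w2)
    (hsum : (∑ w1 : V1, ∑ w2 : V2, p w1 w2) = 1) :
    let p1 : V1 → ℝ := fun w1 => ∑ w : V2, p w1 w
    let p2 : V2 → ℝ := fun w2 => ∑ w : V1, p w w2
    let Z : ℝ := ∑ x : V1, ∑ y : V2, p x y ^ 2 / (p1 x * p2 y)
    let q : V1 → V2 → ℝ := fun w1 w2 => p w1 w2 ^ 2 / (p1 w1 * p2 w2 * Z)
    (∀ w1 w2, q w1 w2 = p w1 w2) ↔ (∀ w1 w2, p w1 w2 = p1 w1 * p2 w2) :=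
  mrf_equals_joint_iff_independent_general p hpos hsum
end

section
/- The Jensen gap log E[X] − E[log X] for a positive random variable X on a finite probability space is zero if and only if X is constant on the support of the measure; consequently, the KL divergence between a true conditional and the MRF conditional, which equals this Jensen gap with X(w) = p_{2|1}(w2|w) under w ∼ p_{1|2}(·|w2), vanishes for all w2 iff p_{2|1}(w2|w1) does not depend on w1. -/
/-!
The Jensen gap `log E[X] - E[log X]` vanishes exactly for constant `X` by the equality case of
Jensen's inequality for the strictly concave logarithm. For the MRF, the conditional
`q_{1|2}(· | w2)` is `p_{1|2}(· | w2)` reweighted by `p_{2|1}(w2 | ·)` (the constant `Z` cancels),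
and the KL divergence from any `m` to its reweighting `m X / E_m[X]` is the Jensen gap of `X`
under `m`.
-/

open Finset Real

section

variable {ι : Type*} [Fintype ι]

noncomputable def jensenGap (m X : ι → ℝ) : ℝ :=
  log (∑ i, m i * X i) - ∑ i, m i * log (X i)

theorem jensenGap_eq_zero_iff {m X : ι → ℝ} (hm : ∀ i, 0 < m i) (hmsum : ∑ i, m i = 1)
    (hX : ∀ i, 0 < X i) : jensenGap m X = 0 ↔ ∀ i j, X i = X j := by
  have := strictConcaveOn_log_Ioi.map_sum_eq_iff_of_pos (t := univ) (w := m) (p := X)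
    (fun i _ => hm i) hmsum (fun i _ => Set.mem_Ioi.2 (hX i))
  simpa only [jensenGap, sub_eq_zero, smul_eq_mul, mem_univ, forall_const] using this

theorem sum_mul_log_div_reweight_eq_jensenGap {m X : ι → ℝ} (hmsum : ∑ i, m i = 1)
    (hX : ∀ i, X i ≠ 0) (hmX : ∑ i, m i * X i ≠ 0) :
    ∑ i, m i * log (m i / (m i * X i / ∑ j, m j * X j)) = jensenGap m X := by
  have hterm : ∀ i, m i * log (m i / (m i * X i / ∑ j, m j * X j))
      = m i * log (∑ j, m j * X j) - m i * log (X i) := by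
    intro i
    rcases eq_or_ne (m i) 0 with hi | hi
    · simp only [hi, zero_mul, sub_self]
    · rw [div_div_eq_mul_div, mul_div_mul_left _ _ hi, log_div hmX (hX i), mul_sub]
  rw [sum_congr rfl fun i _ => hterm i, sum_sub_distrib, ← sum_mul, hmsum, one_mul, jensenGap]

theorem div_const_div_sum_div_const_s16 (f : ι → ℝ) {Z : ℝ} (hZ : Z ≠ 0) (i : ι) :
    f i / Z / ∑ j, f j / Z = f i / ∑ j, f j := by
  rw [← sum_div, div_div_div_cancel_right₀ hZ]

end

theorem jensen_gap_zero_iff_const_and_mrf_consequence_general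
    {Ω : Type*} [Fintype Ω]
    (m : Ω → ℝ) (hm : ∀ ω, 0 < m ω) (hmsum : (∑ ω : Ω, m ω) = 1)
    (X : Ω → ℝ) (hX : ∀ ω, 0 < X ω)
    {V1 V2 : Type*} [Fintype V1] [Fintype V2] [Nonempty V1]
    (p : V1 → V2 → ℝ) (hpos : ∀ w1 w2, 0 < p w1 w2) :
    (Real.log (∑ ω : Ω, m ω * X ω) - (∑ ω : Ω, m ω * Real.log (X ω)) = 0
      ↔ ∀ ω ω' : Ω, X ω = X ω') ∧
    (let p1 : V1 → ℝ := fun w1 => ∑ w : V2, p w1 w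
     let p2 : V2 → ℝ := fun w2 => ∑ w : V1, p w w2
     let p12 : V1 → V2 → ℝ := fun a b => p a b / p2 b
     let p21 : V2 → V1 → ℝ := fun b a => p a b / p1 a
     let Z : ℝ := ∑ a : V1, ∑ b : V2, p12 a b * p21 b a
     let q : V1 → V2 → ℝ := fun a b => p12 a b * p21 b a / Z
     let q12 : V1 → V2 → ℝ := fun a b => q a b / ∑ w : V1, q w b
     (∀ w2, (∑ w : V1, p12 w w2 * Real.log (p12 w w2 / q12 w w2)) = 0)
       ↔ ∀ w2 w1 w1', p21 w2 w1 = p21 w2 w1') := by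
  refine ⟨jensenGap_eq_zero_iff hm hmsum hX, ?_⟩
  intro p1 p2 p12 p21 Z q q12
  have hp2 b : 0 < p2 b := sum_pos (fun w _ => hpos w b) univ_nonempty
  have hp12 a b : 0 < p12 a b := div_pos (hpos a b) (hp2 b)
  have hp21 b a : 0 < p21 b a :=
    div_pos (hpos a b) (sum_pos (fun w _ => hpos a w) ⟨b, mem_univ b⟩)
  have hp12sum b : ∑ a, p12 a b = 1 := by rw [← sum_div, div_self (hp2 b).ne']
  have hZ b : Z ≠ 0 :=
    (sum_pos (fun a _ => sum_pos (fun b _ => mul_pos (hp12 a b) (hp21 b a)) ⟨b, mem_univ b⟩)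
      univ_nonempty).ne'
  have hkl b : ∑ a, p12 a b * log (p12 a b / q12 a b)
      = jensenGap (fun a => p12 a b) (fun a => p21 b a) := by
    rw [← sum_mul_log_div_reweight_eq_jensenGap (hp12sum b) (fun a => (hp21 b a).ne')
      (sum_pos (fun a _ => mul_pos (hp12 a b) (hp21 b a)) univ_nonempty).ne']
    refine sum_congr rfl fun a _ => ?_
    simp only [q12, q, div_const_div_sum_div_const_s16 (fun a => p12 a b * p21 b a) (hZ b)]
  simp only [hkl]
  exact forall_congr' fun b => jensenGap_eq_zero_iff (hp12 · b) (hp12sum b) (hp21 b)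

/-- (i) On a finite probability space with strictly positive mass
function, the Jensen gap `log E[X] − E[log X]` of a positive random variable `X`
vanishes iff `X` is constant; (ii) consequently, for a strictly positive joint
`p` on `V1 × V2`, the KL divergence between the true conditional and the MRF
conditional vanishes for all `w2` iff `p_{2|1}(w2|w1)` does not depend on `w1`. -/
theorem jensen_gap_zero_iff_const_and_mrf_consequence
    {Ω : Type*} [Fintype Ω] [Nonempty Ω]
    (m : Ω → ℝ) (hm : ∀ ω, 0 < m ω) (hmsum : (∑ ω : Ω, m ω) = 1)
    (X : Ω → ℝ) (hX : ∀ ω, 0 < X ω)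
    {V1 V2 : Type*} [Fintype V1] [Fintype V2] [Nonempty V1] [Nonempty V2]
    (p : V1 → V2 → ℝ) (hpos : ∀ w1 w2, 0 < p w1 w2)
    (hsum : (∑ w1 : V1, ∑ w2 : V2, p w1 w2) = 1) :
    (Real.log (∑ ω : Ω, m ω * X ω) - (∑ ω : Ω, m ω * Real.log (X ω)) = 0
      ↔ ∀ ω ω' : Ω, X ω = X ω') ∧
    (let p1 : V1 → ℝ := fun w1 => ∑ w : V2, p w1 w
     let p2 : V2 → ℝ := fun w2 => ∑ w : V1, p w w2
     let p12 : V1 → V2 → ℝ := fun a b => p a b / p2 b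
     let p21 : V2 → V1 → ℝ := fun b a => p a b / p1 a
     let Z : ℝ := ∑ a : V1, ∑ b : V2, p12 a b * p21 b a
     let q : V1 → V2 → ℝ := fun a b => p12 a b * p21 b a / Z
     let q12 : V1 → V2 → ℝ := fun a b => q a b / ∑ w : V1, q w b
     (∀ w2, (∑ w : V1, p12 w w2 * Real.log (p12 w w2 / q12 w w2)) = 0)
       ↔ ∀ w2 w1 w1', p21 w2 w1 = p21 w2 w1') :=
  jensen_gap_zero_iff_const_and_mrf_consequence_general m hm hmsum X hX p hpos
end
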